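/- Let m, n ≥ 3 be integers and let G_{m,n} be the subgroup of SL(2,ℝ) generated by A = [[1, 2cos(π/m) + 2cos(π/n)], [0, 1]] and B = [[2cos(π/m), 1], [−1, 0]]. If M ∈ G_{m,n} is parabolic and α ∈ ℝ is a fixed point of the Möbius action of M (i.e., M·α = α), then α lies in the subfield ℚ(cos(π/m), cos(π/n)) of ℝ. -/

import Mathlib

/-!
All entries of a matrix in `G_{m,n}` lie in the field `K = ℚ(cos(π/m), cos(π/n))`, since this
holds for the generators and the elements of `SL(2, ℝ)` with entries in a subring form a
subgroup (the image of `SL(2, K)`). For `M = [[a, b], [c, d]]` the fixed points are the roots of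
`c z² + (d - a) z - b`, whose discriminant `(a + d)² - 4` vanishes when `M` is parabolic, so the
fixed point is `(a - d) / (2c)`, which lies in `K`. Here `c ≠ 0`, since `c = 0` together with a
finite fixed point forces `M = ±1`.
-/

open Real Matrix

/-- A matrix in SL(2,ℝ) is parabolic if it is not ±I and has trace of absolute value 2. -/
def IsParabolicMat (M : Matrix (Fin 2) (Fin 2) ℝ) : Prop :=
  M ≠ 1 ∧ M ≠ -1 ∧ |Matrix.trace M| = 2

/-- The Möbius action of `M` fixes the real number `z`. -/
def MoebiusFixes (M : Matrix (Fin 2) (Fin 2) ℝ) (z : ℝ) : Prop :=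
  M 0 0 * z + M 0 1 = (M 1 0 * z + M 1 1) * z

namespace Matrix.SpecialLinearGroup

variable {n : Type*} [Fintype n] [DecidableEq n] {R σ : Type*} [CommRing R] [SetLike σ R]
  [SubringClass σ R] {S : σ}

theorem mem_range_map_subtype_iff {g : SpecialLinearGroup n R} :
    g ∈ (map (SubringClass.subtype S)).range ↔ ∀ i j, g i j ∈ S := by
  constructor
  · rintro ⟨g', rfl⟩ i j
    exact (g' i j).2
  · intro hg
    let g' : Matrix n n S := Matrix.of fun i j => ⟨g i j, hg i j⟩
    have hdet : det g' = 1 := Subtype.val_injective <| by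
      change SubringClass.subtype S (det g') = SubringClass.subtype S 1
      rw [RingHom.map_det, map_one]
      exact g.det_coe
    exact ⟨⟨g', hdet⟩, Subtype.ext <| Matrix.ext fun _ _ => rfl⟩

theorem entries_mem_of_mem_closure {s : Set (SpecialLinearGroup n R)}
    (hs : ∀ g ∈ s, ∀ i j, g i j ∈ S) {g : SpecialLinearGroup n R}
    (hg : g ∈ Subgroup.closure s) : ∀ i j, g i j ∈ S :=
  mem_range_map_subtype_iff.mp <|
    (Subgroup.closure_le _).mpr (fun g hg => mem_range_map_subtype_iff.mpr (hs g hg)) hg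

end Matrix.SpecialLinearGroup

section FixedPoint

variable {R : Type*} [CommRing R] [NoZeroDivisors R] {M : Matrix (Fin 2) (Fin 2) R} {z : R}

theorem two_mul_lowerLeft_mul_eq_of_trace_sq (hdet : M.det = 1) (htr : M.trace ^ 2 = 4)
    (hz : M 0 0 * z + M 0 1 = (M 1 0 * z + M 1 1) * z) :
    2 * M 1 0 * z = M 0 0 - M 1 1 := by
  rw [det_fin_two] at hdet
  rw [trace_fin_two] at htr
  -- the fixed-point quadratic `c z² + (d - a) z - b` has discriminant `tr² - 4 det = 0`
  have hsq : (2 * M 1 0 * z - (M 0 0 - M 1 1)) ^ 2 = 0 := by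
    linear_combination (-4 * M 1 0) * hz + htr - 4 * hdet
  exact sub_eq_zero.mp (pow_eq_zero_iff two_ne_zero |>.mp hsq)

theorem eq_one_or_eq_neg_one_of_trace_sq (hdet : M.det = 1) (htr : M.trace ^ 2 = 4)
    (hz : M 0 0 * z + M 0 1 = (M 1 0 * z + M 1 1) * z) (hc : M 1 0 = 0) :
    M = 1 ∨ M = -1 := by
  have hdiag : M 0 0 = M 1 1 := by
    have := two_mul_lowerLeft_mul_eq_of_trace_sq hdet htr hz
    rw [hc] at this
    linear_combination -this
  rw [det_fin_two, hc, ← hdiag] at hdet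
  have hb : M 0 1 = 0 := by
    rw [hc, ← hdiag] at hz
    linear_combination hz
  rw [eta_fin_two M, hb, hc, ← hdiag]
  rcases mul_self_eq_one_iff.mp (by linear_combination hdet : M 0 0 * M 0 0 = 1) with h | h
  · left; rw [h]; exact one_fin_two.symm
  · right; rw [h]; ext i j; fin_cases i <;> fin_cases j <;> simp

end FixedPoint

theorem stmt6_general (m n : ℕ)
    (A B : Matrix.SpecialLinearGroup (Fin 2) ℝ)
    (hA : (A : Matrix (Fin 2) (Fin 2) ℝ) =
      !![1, 2 * Real.cos (Real.pi / (m : ℝ)) + 2 * Real.cos (Real.pi / (n : ℝ)); 0, 1])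
    (hB : (B : Matrix (Fin 2) (Fin 2) ℝ) =
      !![2 * Real.cos (Real.pi / (m : ℝ)), 1; -1, 0])
    (M : Matrix.SpecialLinearGroup (Fin 2) ℝ)
    (hM : M ∈ Subgroup.closure ({A, B} : Set (Matrix.SpecialLinearGroup (Fin 2) ℝ)))
    (hpar : IsParabolicMat (M : Matrix (Fin 2) (Fin 2) ℝ))
    (α : ℝ) (hfix : MoebiusFixes (M : Matrix (Fin 2) (Fin 2) ℝ) α) :
    α ∈ Subfield.closure ({Real.cos (Real.pi / (m : ℝ)),
      Real.cos (Real.pi / (n : ℝ))} : Set ℝ) := by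
  set K := Subfield.closure ({Real.cos (Real.pi / (m : ℝ)),
      Real.cos (Real.pi / (n : ℝ))} : Set ℝ)
  have hcm : Real.cos (Real.pi / m) ∈ K := Subfield.subset_closure (by simp)
  have hcn : Real.cos (Real.pi / n) ∈ K := Subfield.subset_closure (by simp)
  have hgens : ∀ g ∈ ({A, B} : Set _), ∀ i j, (g : Matrix (Fin 2) (Fin 2) ℝ) i j ∈ K := by
    rintro g (rfl | rfl) i j <;> fin_cases i <;> fin_cases j <;>
      simp [hA, hB, K.one_mem, K.zero_mem, K.mul_mem, K.add_mem, hcm, hcn]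
  have hentries := Matrix.SpecialLinearGroup.entries_mem_of_mem_closure hgens hM
  have htr : (M : Matrix (Fin 2) (Fin 2) ℝ).trace ^ 2 = 4 := by
    rw [← sq_abs, hpar.2.2]; norm_num
  have hc : (M : Matrix (Fin 2) (Fin 2) ℝ) 1 0 ≠ 0 := fun hc =>
    (eq_one_or_eq_neg_one_of_trace_sq M.det_coe htr hfix hc).elim hpar.1 hpar.2.1
  have hα : α = (M 0 0 - M 1 1) / (2 * M 1 0) :=
    eq_div_of_mul_eq (mul_ne_zero two_ne_zero hc)
      (by linear_combination two_mul_lowerLeft_mul_eq_of_trace_sq M.det_coe htr hfix)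
  rw [hα]
  exact K.div_mem (K.sub_mem (hentries 0 0) (hentries 1 1))
    (K.mul_mem (ofNat_mem K 2) (hentries 1 0))

theorem stmt6 (m n : ℕ) (hm : 3 ≤ m) (hn : 3 ≤ n)
    (A B : Matrix.SpecialLinearGroup (Fin 2) ℝ)
    (hA : (A : Matrix (Fin 2) (Fin 2) ℝ) =
      !![1, 2 * Real.cos (Real.pi / (m : ℝ)) + 2 * Real.cos (Real.pi / (n : ℝ)); 0, 1])
    (hB : (B : Matrix (Fin 2) (Fin 2) ℝ) =
      !![2 * Real.cos (Real.pi / (m : ℝ)), 1; -1, 0])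
    (M : Matrix.SpecialLinearGroup (Fin 2) ℝ)
    (hM : M ∈ Subgroup.closure ({A, B} : Set (Matrix.SpecialLinearGroup (Fin 2) ℝ)))
    (hpar : IsParabolicMat (M : Matrix (Fin 2) (Fin 2) ℝ))
    (α : ℝ) (hfix : MoebiusFixes (M : Matrix (Fin 2) (Fin 2) ℝ) α) :
    α ∈ Subfield.closure ({Real.cos (Real.pi / (m : ℝ)),
      Real.cos (Real.pi / (n : ℝ))} : Set ℝ) :=
  stmt6_general m n A B hA hB M hM hpar α hfix
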